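/- Let 𝒥 be the set of finitely supported multi-indices. If F = Σ_α a_α K_α and G = Σ_β b_β K_β are formal series with ‖F‖²_{-1,-k₁} = Σ_α a_α² (2ℕ)^{-k₁α} < ∞ and ‖G‖²_{-1,-k₂} = Σ_β b_β² (2ℕ)^{-k₂β} < ∞, then the Wick product F◇G = Σ_γ (Σ_{α+β=γ} a_α b_β) K_γ satisfies ‖F◇G‖_{-1,-k} < ∞ for some k (e.g. k = k₁ + k₂ + q for any q with Σ_{α≠0}(2ℕ)^{-qα} < ∞). -/

import Mathlib

/-- `(2ℕ)^{kα} = Π_j (2j)^{k·α_j}` for a finitely supported multi-index `α`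
(coordinates indexed by `j = 1, 2, …`). -/
noncomputable def twoNatPow (k : ℝ) (α : ℕ →₀ ℕ) : ℝ :=
  ∏ j ∈ α.support, ((2 * ((j : ℕ) + 1) : ℝ)) ^ (k * (α j : ℝ))

/-! The Cauchy–Schwarz inequality on the antidiagonal `{α + β = γ}` costs the factor
`#{α + β = γ} ≤ 2^{|γ|} ≤ (2ℕ)^γ`, which one extra power absorbs, so `k = k₁ + k₂ + 1` works.
Since `(2ℕ)^{-kγ}` only decreases as `γ` grows, what remains is dominated by the Cauchy product
of the two summable families `a_α² (2ℕ)^{-k₁α}` and `b_β² (2ℕ)^{-k₂β}`, which is summable. -/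

open Finset

theorem Finsupp.card_antidiagonal_le_two_pow_degree {σ : Type*} [DecidableEq σ] (f : σ →₀ ℕ) :
    #(antidiagonal f) ≤ 2 ^ f.degree := by
  calc #(antidiagonal f)
      ≤ Multiset.card ((toMultiset f).antidiagonal.map
          (Prod.map Multiset.toFinsupp Multiset.toFinsupp)) := Multiset.toFinset_card_le _
    _ = 2 ^ f.degree := by
      rw [Multiset.card_map, Multiset.card_antidiagonal, card_toMultiset, degree_apply]
      rfl

section twoNatPow

variable (k k₁ k₂ : ℝ) (α β γ : ℕ →₀ ℕ)

theorem twoNatPow_pos : 0 < twoNatPow k α :=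
  prod_pos fun _ _ => Real.rpow_pos_of_pos (by positivity) _

theorem twoNatPow_add_left : twoNatPow (k₁ + k₂) α = twoNatPow k₁ α * twoNatPow k₂ α := by
  rw [twoNatPow, twoNatPow, twoNatPow, ← prod_mul_distrib]
  exact prod_congr rfl fun j _ => by rw [add_mul, Real.rpow_add (by positivity)]

theorem twoNatPow_eq_prod_of_support_subset {s : Finset ℕ} (hs : α.support ⊆ s) :
    twoNatPow k α = ∏ j ∈ s, ((2 * ((j : ℕ) + 1) : ℝ)) ^ (k * (α j : ℝ)) :=
  prod_subset hs fun j _ hj => by simp [Finsupp.notMem_support_iff.mp hj]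

theorem twoNatPow_add_right : twoNatPow k (α + β) = twoNatPow k α * twoNatPow k β := by
  rw [twoNatPow_eq_prod_of_support_subset k (α + β) Finsupp.support_add,
    twoNatPow_eq_prod_of_support_subset k α subset_union_left,
    twoNatPow_eq_prod_of_support_subset k β subset_union_right, ← prod_mul_distrib]
  refine prod_congr rfl fun j _ => ?_
  rw [Finsupp.add_apply, ← Real.rpow_add (by positivity), Nat.cast_add, mul_add k]

variable {k k₁ k₂}

theorem twoNatPow_le_one (hk : k ≤ 0) : twoNatPow k α ≤ 1 :=
  prod_le_one (fun _ _ => (Real.rpow_pos_of_pos (by positivity) _).le) fun _ _ =>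
    Real.rpow_le_one_of_one_le_of_nonpos (by linarith)
      (mul_nonpos_of_nonpos_of_nonneg hk (Nat.cast_nonneg _))

theorem twoNatPow_add_le (hk₁ : k₁ ≤ 0) (hk₂ : k₂ ≤ 0) :
    twoNatPow (k₁ + k₂) (α + β) ≤ twoNatPow k₁ α * twoNatPow k₂ β := by
  rw [twoNatPow_add_left, twoNatPow_add_right, twoNatPow_add_right]
  exact mul_le_mul (mul_le_of_le_one_right (twoNatPow_pos _ _).le (twoNatPow_le_one _ hk₁))
    (mul_le_of_le_one_left (twoNatPow_pos _ _).le (twoNatPow_le_one _ hk₂))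
    (mul_pos (twoNatPow_pos _ _) (twoNatPow_pos _ _)).le (twoNatPow_pos _ _).le

theorem two_pow_degree_le_twoNatPow_one : (2 : ℝ) ^ γ.degree ≤ twoNatPow 1 γ := by
  rw [Finsupp.degree_apply, ← prod_pow_eq_pow_sum, twoNatPow]
  refine prod_le_prod (fun _ _ => by positivity) fun j _ => ?_
  rw [one_mul, Real.rpow_natCast]
  exact pow_le_pow_left₀ zero_le_two (by linarith [(Nat.cast_nonneg j : (0 : ℝ) ≤ j)]) _

theorem card_antidiagonal_le_twoNatPow_one : (#(antidiagonal γ) : ℝ) ≤ twoNatPow 1 γ :=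
  calc (#(antidiagonal γ) : ℝ) ≤ (2 : ℝ) ^ γ.degree := by
        exact_mod_cast γ.card_antidiagonal_le_two_pow_degree
    _ ≤ twoNatPow 1 γ := two_pow_degree_le_twoNatPow_one γ

theorem sq_sum_antidiagonal_mul_mul_twoNatPow_le (a b : (ℕ →₀ ℕ) → ℝ) (hk₁ : 0 ≤ k₁)
    (hk₂ : 0 ≤ k₂) :
    (∑ p ∈ antidiagonal γ, a p.1 * b p.2) ^ 2 * twoNatPow (-(k₁ + k₂ + 1)) γ ≤
      ∑ p ∈ antidiagonal γ,
        (a p.1 ^ 2 * twoNatPow (-k₁) p.1) * (b p.2 ^ 2 * twoNatPow (-k₂) p.2) := by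
  have hw : twoNatPow (-(k₁ + k₂ + 1)) γ * twoNatPow 1 γ = twoNatPow (-k₁ + -k₂) γ := by
    rw [← twoNatPow_add_left]; ring_nf
  have hw_nonneg := (twoNatPow_pos (-(k₁ + k₂ + 1)) γ).le
  calc (∑ p ∈ antidiagonal γ, a p.1 * b p.2) ^ 2 * twoNatPow (-(k₁ + k₂ + 1)) γ
      ≤ (#(antidiagonal γ) * ∑ p ∈ antidiagonal γ, (a p.1 * b p.2) ^ 2) *
          twoNatPow (-(k₁ + k₂ + 1)) γ :=
        mul_le_mul_of_nonneg_right sq_sum_le_card_mul_sum_sq hw_nonneg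
    _ ≤ (twoNatPow 1 γ * ∑ p ∈ antidiagonal γ, (a p.1 * b p.2) ^ 2) *
          twoNatPow (-(k₁ + k₂ + 1)) γ := by
        gcongr
        exact card_antidiagonal_le_twoNatPow_one γ
    _ = ∑ p ∈ antidiagonal γ, (a p.1 * b p.2) ^ 2 * twoNatPow (-k₁ + -k₂) γ := by
        rw [← hw, ← sum_mul]; ring
    _ ≤ ∑ p ∈ antidiagonal γ,
          (a p.1 ^ 2 * twoNatPow (-k₁) p.1) * (b p.2 ^ 2 * twoNatPow (-k₂) p.2) := by
        refine sum_le_sum fun p hp => ?_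
        rw [← mem_antidiagonal.mp hp]
        calc (a p.1 * b p.2) ^ 2 * twoNatPow (-k₁ + -k₂) (p.1 + p.2)
            ≤ (a p.1 * b p.2) ^ 2 * (twoNatPow (-k₁) p.1 * twoNatPow (-k₂) p.2) :=
              mul_le_mul_of_nonneg_left
                (twoNatPow_add_le _ _ (neg_nonpos.mpr hk₁) (neg_nonpos.mpr hk₂)) (sq_nonneg _)
          _ = _ := by ring

end twoNatPow

/-- The Kondratiev space `(S)_{-1}` is closed under the Wick product: if
`Σ_α a_α² (2ℕ)^{-k₁α} < ∞` and `Σ_β b_β² (2ℕ)^{-k₂β} < ∞`, then the Wick product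
coefficients `c_γ = Σ_{α+β=γ} a_α b_β` satisfy `Σ_γ c_γ² (2ℕ)^{-kγ} < ∞` for some `k`. -/
theorem wick_product_in_kondratiev (a b : (ℕ →₀ ℕ) → ℝ) (k₁ k₂ : ℕ)
    (ha : Summable fun α => a α ^ 2 * twoNatPow (-(k₁ : ℝ)) α)
    (hb : Summable fun β => b β ^ 2 * twoNatPow (-(k₂ : ℝ)) β) :
    ∃ k : ℕ, Summable fun γ : ℕ →₀ ℕ =>
      (∑ p ∈ Finset.HasAntidiagonal.antidiagonal γ, a p.1 * b p.2) ^ 2 * twoNatPow (-(k : ℝ)) γ := by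
  refine ⟨k₁ + k₂ + 1, ?_⟩
  have hprod := ha.mul_of_nonneg hb (fun α => mul_nonneg (sq_nonneg _) (twoNatPow_pos _ _).le)
    (fun β => mul_nonneg (sq_nonneg _) (twoNatPow_pos _ _).le)
  have hcauchy := summable_sum_mul_antidiagonal_of_summable_mul
    (f := fun α => a α ^ 2 * twoNatPow (-(k₁ : ℝ)) α)
    (g := fun β => b β ^ 2 * twoNatPow (-(k₂ : ℝ)) β) hprod
  refine hcauchy.of_nonneg_of_le (fun γ => mul_nonneg (sq_nonneg _) (twoNatPow_pos _ _).le)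
    fun γ => ?_
  push_cast
  exact sq_sum_antidiagonal_mul_mul_twoNatPow_le γ a b k₁.cast_nonneg k₂.cast_nonneg
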